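/- arXiv:2311.15502 — 3 statements merged into one kernel-verified Lean document; each statement's English description precedes it below -/
import Mathlib

section
/- Under SCAR, the expectation of the partial empirical risk R̂ᴾ_k(f_k) = ((π̄_k + π_k − 1)/n_k^N) Σ_{i=1}^{n_k^N} ℓ(f_k(x_{k,i}^N)) + ((1−π̄_k)/n_k^U) Σ_{i=1}^{n_k^U} ℓ(f_k(x_{k,i}^U)) equals π_k E_{p(x|y=k)}[ℓ(f_k(x))], and is in particular nonnegative. -/
/-!
By linearity and identical distribution, the expected partial risk is
`(π̄ + π - 1) E₁[ℓ ∘ f] + (1 - π̄) E₀[ℓ ∘ f]`, where `E₁`, `E₀` are expectations under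
`p(x | ȳ = 1)` and `p(x | ȳ = 0)`. Integrating `ℓ ∘ f` against the two decompositions of `p(x)`
gives `π̄ E₁ + (1 - π̄) E₀ = π E_P + (1 - π) E_N`, and SCAR identifies `E_N` with `E₁`; the
`E₁` terms cancel and leave `π E_P`, which is nonnegative since `ℓ ≥ 0`.
-/

open MeasureTheory

section

variable {α β E : Type*} [MeasurableSpace α] [MeasurableSpace β] [NormedAddCommGroup E]

/-- `Measure.map` sends a map that is not a.e.-measurable to the junk value `0`. -/
theorem aemeasurable_of_map_eq {μ : Measure α} {ν : Measure β} [NeZero ν] {X : α → β}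
    (hX : μ.map X = ν) : AEMeasurable X μ :=
  AEMeasurable.of_map_ne_zero (hX ▸ NeZero.ne ν)

theorem integrable_comp_of_map_eq {μ : Measure α} {ν : Measure β} [NeZero ν] {X : α → β}
    (hX : μ.map X = ν) {g : β → E} (hg : Integrable g ν) : Integrable (fun ω => g (X ω)) μ :=
  (integrable_map_measure (hX ▸ hg.aestronglyMeasurable) (aemeasurable_of_map_eq hX)).mp
    (hX ▸ hg)

theorem integral_comp_of_map_eq [NormedSpace ℝ E] {μ : Measure α} {ν : Measure β} [NeZero ν] {X : α → β}
    (hX : μ.map X = ν) {g : β → E} (hg : AEStronglyMeasurable g ν) :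
    ∫ ω, g (X ω) ∂μ = ∫ x, g x ∂ν := by
  rw [← integral_map (aemeasurable_of_map_eq hX) (hX ▸ hg), hX]

theorem integral_ofReal_smul_add_ofReal_smul [NormedSpace ℝ E] {a b : ℝ} (ha : 0 ≤ a) (hb : 0 ≤ b)
    {μ ν : Measure α} {g : α → E} (hμ : Integrable g μ) (hν : Integrable g ν) :
    ∫ x, g x ∂(ENNReal.ofReal a • μ + ENNReal.ofReal b • ν)
      = a • ∫ x, g x ∂μ + b • ∫ x, g x ∂ν := by
  rw [integral_add_measure (hμ.smul_measure ENNReal.ofReal_ne_top)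
      (hν.smul_measure ENNReal.ofReal_ne_top),
    integral_smul_measure, integral_smul_measure, ENNReal.toReal_ofReal ha,
    ENNReal.toReal_ofReal hb]

variable {μ : Measure α} {ν : Measure β} [NeZero ν] {n : ℕ} {X : Fin n → α → β} {g : β → ℝ}

theorem integrable_const_mul_sum_of_map_eq (hX : ∀ i, μ.map (X i) = ν) (hg : Integrable g ν)
    (c : ℝ) : Integrable (fun ω => c * ∑ i, g (X i ω)) μ :=
  (integrable_finsetSum _ fun i _ => integrable_comp_of_map_eq (hX i) hg).const_mul c

theorem integral_weighted_sample_mean (hn : 0 < n) (hX : ∀ i, μ.map (X i) = ν)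
    (hg : Integrable g ν) (c : ℝ) :
    ∫ ω, c / n * ∑ i, g (X i ω) ∂μ = c * ∫ x, g x ∂ν := by
  rw [integral_const_mul,
    integral_finsetSum _ fun i _ => integrable_comp_of_map_eq (hX i) hg]
  simp only [integral_comp_of_map_eq (hX _) hg.aestronglyMeasurable, Finset.sum_const,
    Finset.card_univ, Fintype.card_fin, nsmul_eq_mul]
  field_simp [Nat.cast_ne_zero.mpr hn.ne']

end

theorem partial_risk_expectation_general
    {X Ω : Type*} [MeasurableSpace X] [MeasurableSpace Ω]
    (μΩ : Measure Ω)
    (μP μN μbar1 μbar0 : Measure X)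
    [IsProbabilityMeasure μbar1] [IsProbabilityMeasure μbar0]
    (π πbar : ℝ) (l : ℝ → ℝ) (f : X → ℝ)
    (nN nU : ℕ) (hnN : 0 < nN) (hnU : 0 < nU)
    (XN : Fin nN → Ω → X) (XU : Fin nU → Ω → X)
    (hlawN : ∀ i, Measure.map (XN i) μΩ = μbar1)
    (hlawU : ∀ i, Measure.map (XU i) μΩ = μbar0)
    -- SCAR: p(x|ȳ_k=1) = p(x|y≠k) and π̄_k = c_k (1 − π_k)
    (hscar : μbar1 = μN)
    -- both mixtures equal the marginal p(x)
    (hmix : (ENNReal.ofReal πbar) • μbar1 + (ENNReal.ofReal (1 - πbar)) • μbar0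
      = (ENNReal.ofReal π) • μP + (ENNReal.ofReal (1 - π)) • μN)
    (hl : ∀ z, 0 ≤ l z)
    (hπ0 : 0 ≤ π) (hπ1 : π ≤ 1) (hπbar0 : 0 ≤ πbar) (hπbar1 : πbar ≤ 1)
    (hintP : Integrable (fun x => l (f x)) μP)
    (hint1 : Integrable (fun x => l (f x)) μbar1)
    (hint0 : Integrable (fun x => l (f x)) μbar0) :
    (∫ ω, ((πbar + π - 1) / (nN : ℝ) * ∑ i, l (f (XN i ω))
          + (1 - πbar) / (nU : ℝ) * ∑ i, l (f (XU i ω))) ∂μΩ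
        = π * ∫ x, l (f x) ∂μP)
      ∧ 0 ≤ π * ∫ x, l (f x) ∂μP := by
  subst hscar
  have hmarginal := congrArg (fun μ => ∫ x, l (f x) ∂μ) hmix
  simp only [integral_ofReal_smul_add_ofReal_smul hπbar0 (sub_nonneg.mpr hπbar1) hint1 hint0,
    integral_ofReal_smul_add_ofReal_smul hπ0 (sub_nonneg.mpr hπ1) hintP hint1,
    smul_eq_mul] at hmarginal
  refine ⟨?_, mul_nonneg hπ0 (integral_nonneg fun x => hl (f x))⟩
  rw [integral_add, integral_weighted_sample_mean hnN hlawN hint1,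
    integral_weighted_sample_mean hnU hlawU hint0]
  · linarith
  · exact integrable_const_mul_sum_of_map_eq hlawN hint1 ((πbar + π - 1) / nN)
  · exact integrable_const_mul_sum_of_map_eq hlawU hint0 ((1 - πbar) / nU)

/-- under SCAR, the expectation of the partial empirical risk
R̂ᴾ_k(f_k) = ((π̄+π−1)/n^N) Σ_i ℓ(f(x_i^N)) + ((1−π̄)/n^U) Σ_i ℓ(f(x_i^U))
equals π E_{p(x|y=k)}[ℓ(f(x))] and is nonnegative. -/
theorem partial_risk_expectation
    {X Ω : Type*} [MeasurableSpace X] [MeasurableSpace Ω]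
    (μΩ : Measure Ω) [IsProbabilityMeasure μΩ]
    (μP μN μbar1 μbar0 : Measure X)
    [IsProbabilityMeasure μP] [IsProbabilityMeasure μN]
    [IsProbabilityMeasure μbar1] [IsProbabilityMeasure μbar0]
    (π πbar ck : ℝ) (l : ℝ → ℝ) (f : X → ℝ)
    (nN nU : ℕ) (hnN : 0 < nN) (hnU : 0 < nU)
    (XN : Fin nN → Ω → X) (XU : Fin nU → Ω → X)
    (hlawN : ∀ i, Measure.map (XN i) μΩ = μbar1)
    (hlawU : ∀ i, Measure.map (XU i) μΩ = μbar0)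
    -- SCAR: p(x|ȳ_k=1) = p(x|y≠k) and π̄_k = c_k (1 − π_k)
    (hscar : μbar1 = μN) (hpibar : πbar = ck * (1 - π))
    -- both mixtures equal the marginal p(x)
    (hmix : (ENNReal.ofReal πbar) • μbar1 + (ENNReal.ofReal (1 - πbar)) • μbar0
      = (ENNReal.ofReal π) • μP + (ENNReal.ofReal (1 - π)) • μN)
    (hl : ∀ z, 0 ≤ l z)
    (hπ0 : 0 ≤ π) (hπ1 : π ≤ 1) (hπbar0 : 0 ≤ πbar) (hπbar1 : πbar ≤ 1)
    (hintP : Integrable (fun x => l (f x)) μP)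
    (hint1 : Integrable (fun x => l (f x)) μbar1)
    (hint0 : Integrable (fun x => l (f x)) μbar0)
    (hintΩN : ∀ i, Integrable (fun ω => l (f (XN i ω))) μΩ)
    (hintΩU : ∀ i, Integrable (fun ω => l (f (XU i ω))) μΩ) :
    (∫ ω, ((πbar + π - 1) / (nN : ℝ) * ∑ i, l (f (XN i ω))
          + (1 - πbar) / (nU : ℝ) * ∑ i, l (f (XU i ω))) ∂μΩ
        = π * ∫ x, l (f x) ∂μP)
      ∧ 0 ≤ π * ∫ x, l (f x) ∂μP :=
  partial_risk_expectation_general μΩ μP μN μbar1 μbar0 π πbar l f nN nU hnN hnU XN XU hlawN hlawU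
    hscar hmix hl hπ0 hπ1 hπbar0 hπbar1 hintP hint1 hint0
end

section
/- The empirical risk estimator R̂(f_1,...,f_q) = Σ_{k=1}^q R̂_k(f_k), where R̂_k(f_k) = (1/n_k^N) Σ_i [(1−π_k)ℓ(−f_k(x_{k,i}^N)) + (π̄_k+π_k−1)ℓ(f_k(x_{k,i}^N))] + ((1−π̄_k)/n_k^U) Σ_i ℓ(f_k(x_{k,i}^U)), is an unbiased estimator of the ordinary one-versus-rest classification risk R(f_1,...,f_q) under the SCAR assumption. -/
/-!
Take expectations sample by sample. Under SCAR the negative samples of class `k` have law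
`p(x | y ≠ k)`, and the marginal `p(x)` has the two mixture forms
`π̄_k p(x | ȳ_k = 1) + (1 - π̄_k) p(x | ȳ_k = 0) = π_k p(x | y = k) + (1 - π_k) p(x | y ≠ k)`.
Reading this identity against `ℓ(f_k)` makes the weights `π̄_k + π_k - 1` (negative data) and
`1 - π̄_k` (unlabeled data) add up to `π_k E_{y = k}[ℓ(f_k)]`, while
`(1 - π_k) E_{y ≠ k}[ℓ(-f_k)] = Σ_{j ≠ k} π_j E_{y = j}[ℓ(-f_k)]`.
Summing over `k` and exchanging the double sum over pairs `j ≠ k` gives the one-versus-rest risk.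
-/

open MeasureTheory

theorem Finset.sum_sum_erase_comm {ι M : Type*} [Fintype ι] [DecidableEq ι] [AddCommMonoid M]
    (F : ι → ι → M) :
    ∑ k, ∑ j ∈ univ.erase k, F k j = ∑ k, ∑ j ∈ univ.erase k, F j k :=
  sum_comm' fun x y => by simp [ne_comm]

section

variable {Ω X : Type*} [MeasurableSpace Ω] [MeasurableSpace X]

/-- Keeping the weight inside the measure covers `c = 0`, where `g` need not be measurable for the
law of `T`. -/
theorem mul_integral_comp_eq_integral_ofReal_smul {μ : Measure Ω} {ν : Measure X} {T : Ω → X}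
    {g : X → ℝ} {c : ℝ} (hT : AEMeasurable T μ) (hlaw : μ.map T = ν) (hc : 0 ≤ c)
    (hg : AEStronglyMeasurable g (ENNReal.ofReal c • ν)) :
    c * ∫ ω, g (T ω) ∂μ = ∫ x, g x ∂(ENNReal.ofReal c • ν) := by
  subst hlaw
  rcases hc.eq_or_lt with rfl | hc
  · simp
  have hν : μ.map T ≪ ENNReal.ofReal c • μ.map T :=
    Measure.absolutelyContinuous_smul (ENNReal.ofReal_pos.mpr hc).ne'
  rw [integral_smul_measure, ENNReal.toReal_ofReal hc.le, smul_eq_mul,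
    integral_map hT (hg.mono_ac hν)]

theorem integral_div_mul_sum_eq_of_mul_integral_eq {μ : Measure Ω} {n : ℕ} (hn : 0 < n)
    {F : Fin n → Ω → ℝ} (hF : ∀ i, Integrable (F i) μ) {c C : ℝ}
    (hC : ∀ i, c * ∫ ω, F i ω ∂μ = C) :
    ∫ ω, c / n * ∑ i, F i ω ∂μ = C := by
  rw [integral_const_mul, integral_finsetSum _ fun i _ => hF i, div_mul_eq_mul_div,
    Finset.mul_sum, Finset.sum_congr rfl fun i _ => hC i]
  simp only [Finset.sum_const, Finset.card_univ, Fintype.card_fin, nsmul_eq_mul]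
  field_simp

theorem integral_add_integral_eq_of_add_measure_eq {ν₁ ν₂ ρ₁ ρ₂ : Measure X} {g : X → ℝ}
    (h : ν₁ + ν₂ = ρ₁ + ρ₂) (hg : Integrable g (ρ₁ + ρ₂)) :
    ∫ x, g x ∂ν₁ + ∫ x, g x ∂ν₂ = ∫ x, g x ∂ρ₁ + ∫ x, g x ∂ρ₂ := by
  obtain ⟨hρ₁, hρ₂⟩ := integrable_add_measure.mp hg
  obtain ⟨hν₁, hν₂⟩ := integrable_add_measure.mp (h ▸ hg)
  rw [← integral_add_measure hν₁ hν₂, h, integral_add_measure hρ₁ hρ₂]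

theorem integral_finsetSum_ofReal_smul_measure {ι : Type*} {s : Finset ι} {w : ι → ℝ}
    {μ : ι → Measure X} {g : X → ℝ} (hw : ∀ i ∈ s, 0 ≤ w i)
    (hg : ∀ i ∈ s, Integrable g (μ i)) :
    ∫ x, g x ∂(∑ i ∈ s, ENNReal.ofReal (w i) • μ i) = ∑ i ∈ s, w i * ∫ x, g x ∂(μ i) := by
  rw [integral_finsetSum_measure fun i hi => (hg i hi).smul_measure ENNReal.ofReal_ne_top]
  refine Finset.sum_congr rfl fun i hi => ?_
  rw [integral_smul_measure, ENNReal.toReal_ofReal (hw i hi), smul_eq_mul]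

theorem integral_partial_risk_estimator {μ : Measure Ω} {P N B : Measure X} {p a : ℝ}
    {g h : X → ℝ} {nN nU : ℕ} (hnN : 0 < nN) (hnU : 0 < nU)
    {XN : Fin nN → Ω → X} {XU : Fin nU → Ω → X}
    (hXN : ∀ i, AEMeasurable (XN i) μ) (hXU : ∀ i, AEMeasurable (XU i) μ)
    (hlawN : ∀ i, μ.map (XN i) = N) (hlawU : ∀ i, μ.map (XU i) = B)
    (hmix : ENNReal.ofReal a • N + ENNReal.ofReal (1 - a) • B
      = ENNReal.ofReal p • P + ENNReal.ofReal (1 - p) • N)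
    (hp : 0 ≤ p) (hp1 : p ≤ 1) (ha : 0 ≤ a) (ha1 : a ≤ 1)
    (hgP : Integrable g P) (hgN : Integrable g (ENNReal.ofReal (1 - p) • N))
    (hhN : Integrable h (ENNReal.ofReal (1 - p) • N))
    (hgXN : ∀ i, Integrable (fun ω => g (XN i ω)) μ)
    (hhXN : ∀ i, Integrable (fun ω => h (XN i ω)) μ)
    (hgXU : ∀ i, Integrable (fun ω => g (XU i ω)) μ) :
    ∫ ω, (1 / (nN : ℝ) * ∑ i, ((1 - p) * h (XN i ω) + (a + p - 1) * g (XN i ω))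
        + (1 - a) / nU * ∑ i, g (XU i ω)) ∂μ
      = p * ∫ x, g x ∂P + ∫ x, h x ∂(ENNReal.ofReal (1 - p) • N) := by
  have hgM : Integrable g (ENNReal.ofReal p • P + ENNReal.ofReal (1 - p) • N) :=
    (hgP.smul_measure ENNReal.ofReal_ne_top).add_measure hgN
  obtain ⟨hgaN, hgB⟩ := integrable_add_measure.mp (hmix ▸ hgM)
  have hFN : ∀ i, Integrable (fun ω => (1 - p) * h (XN i ω) + (a + p - 1) * g (XN i ω)) μ :=
    fun i => ((hhXN i).const_mul _).add ((hgXN i).const_mul _)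
  -- the weight `a + p - 1` may be negative: split it into the nonnegative weights `a` and `1 - p`
  have hN : ∀ i, 1 * ∫ ω, ((1 - p) * h (XN i ω) + (a + p - 1) * g (XN i ω)) ∂μ
      = ∫ x, h x ∂(ENNReal.ofReal (1 - p) • N)
        + (∫ x, g x ∂(ENNReal.ofReal a • N) - ∫ x, g x ∂(ENNReal.ofReal (1 - p) • N)) := by
    intro i
    rw [one_mul, integral_add ((hhXN i).const_mul _) ((hgXN i).const_mul _),
      integral_const_mul, integral_const_mul, show a + p - 1 = a - (1 - p) by ring,
      sub_mul a (1 - p),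
      mul_integral_comp_eq_integral_ofReal_smul (hXN i) (hlawN i) (sub_nonneg.2 hp1) hhN.1,
      mul_integral_comp_eq_integral_ofReal_smul (hXN i) (hlawN i) (sub_nonneg.2 hp1) hgN.1,
      mul_integral_comp_eq_integral_ofReal_smul (hXN i) (hlawN i) ha hgaN.1]
  have hU : ∀ i, (1 - a) * ∫ ω, g (XU i ω) ∂μ = ∫ x, g x ∂(ENNReal.ofReal (1 - a) • B) :=
    fun i => mul_integral_comp_eq_integral_ofReal_smul (hXU i) (hlawU i) (sub_nonneg.2 ha1) hgB.1
  have hmixg := integral_add_integral_eq_of_add_measure_eq hmix hgM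
  rw [integral_smul_measure _ (ENNReal.ofReal p), ENNReal.toReal_ofReal hp, smul_eq_mul] at hmixg
  rw [integral_add ((integrable_finsetSum _ fun i _ => hFN i).const_mul _)
      ((integrable_finsetSum _ fun i _ => hgXU i).const_mul _),
    integral_div_mul_sum_eq_of_mul_integral_eq hnN hFN hN,
    integral_div_mul_sum_eq_of_mul_integral_eq hnU hgXU hU]
  linarith

end

theorem unbiased_risk_estimator_general
    {X Ω : Type*} [MeasurableSpace X] [MeasurableSpace Ω] {q : ℕ}
    (μΩ : Measure Ω)
    (μP μN μbar1 μbar0 : Fin q → Measure X)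
    [∀ k, IsProbabilityMeasure (μbar1 k)] [∀ k, IsProbabilityMeasure (μbar0 k)]
    (π πbar : Fin q → ℝ) (l : ℝ → ℝ) (f : Fin q → X → ℝ)
    (nN nU : Fin q → ℕ) (hnN : ∀ k, 0 < nN k) (hnU : ∀ k, 0 < nU k)
    (XN : ∀ k, Fin (nN k) → Ω → X) (XU : ∀ k, Fin (nU k) → Ω → X)
    (hlawN : ∀ k i, Measure.map (XN k i) μΩ = μbar1 k)
    (hlawU : ∀ k i, Measure.map (XU k i) μΩ = μbar0 k)
    -- SCAR: p(x|ȳ_k=1) = p(x|y≠k)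
    (hscar : ∀ k, μbar1 k = μN k)
    -- both mixtures equal the marginal p(x)
    (hmix : ∀ k, (ENNReal.ofReal (πbar k)) • μbar1 k + (ENNReal.ofReal (1 - πbar k)) • μbar0 k
      = (ENNReal.ofReal (π k)) • μP k + (ENNReal.ofReal (1 - π k)) • μN k)
    -- (1−π_k) p(x|y≠k) = Σ_{j≠k} π_j p(x|y=j)
    (hrel : ∀ k, (ENNReal.ofReal (1 - π k)) • μN k
      = ∑ j ∈ Finset.univ.erase k, (ENNReal.ofReal (π j)) • μP j)
    (hπ : ∀ k, 0 ≤ π k) (hsum : ∑ k, π k = 1)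
    (hπbar : ∀ k, 0 ≤ πbar k) (hπbar1 : ∀ k, πbar k ≤ 1)
    (hint : ∀ k j, Integrable (fun x => l (f k x)) (μP j))
    (hint' : ∀ k j, Integrable (fun x => l (-(f k x))) (μP j))
    (hintΩN : ∀ k i, Integrable (fun ω => l (f k (XN k i ω))) μΩ)
    (hintΩN' : ∀ k i, Integrable (fun ω => l (-(f k (XN k i ω)))) μΩ)
    (hintΩU : ∀ k i, Integrable (fun ω => l (f k (XU k i ω))) μΩ) :
    ∫ ω, ∑ k, ((1 / (nN k : ℝ)) * ∑ i, ((1 - π k) * l (-(f k (XN k i ω)))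
            + (πbar k + π k - 1) * l (f k (XN k i ω)))
          + ((1 - πbar k) / (nU k : ℝ)) * ∑ i, l (f k (XU k i ω))) ∂μΩ
      = ∑ k, (π k) * ∫ x, (l (f k x)
          + ∑ j ∈ Finset.univ.erase k, l (-(f j x))) ∂(μP k) := by
  have hπ1 : ∀ k, π k ≤ 1 := fun k =>
    hsum ▸ Finset.single_le_sum (fun j _ => hπ j) (Finset.mem_univ k)
  have hintN : ∀ k {g : X → ℝ}, (∀ j, Integrable g (μP j)) →
      Integrable g (ENNReal.ofReal (1 - π k) • μN k) := fun k g hg => by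
    rw [hrel k, integrable_finsetSum_measure]
    exact fun j _ => (hg j).smul_measure ENNReal.ofReal_ne_top
  have hrisk : ∀ k, π k * ∫ x, (l (f k x) + ∑ j ∈ Finset.univ.erase k, l (-(f j x))) ∂(μP k)
      = π k * ∫ x, l (f k x) ∂(μP k)
        + ∑ j ∈ Finset.univ.erase k, π k * ∫ x, l (-(f j x)) ∂(μP k) := fun k => by
    rw [integral_add (hint k k) (integrable_finsetSum _ fun j _ => hint' j k),
      integral_finsetSum _ fun j _ => hint' j k, mul_add, Finset.mul_sum]
  rw [integral_finsetSum _ fun k _ => ?integrable, Finset.sum_congr rfl fun k _ => hrisk k,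
    Finset.sum_add_distrib, Finset.sum_sum_erase_comm, ← Finset.sum_add_distrib]
  case integrable =>
    exact ((integrable_finsetSum _ fun i _ =>
      ((hintΩN' k i).const_mul _).add ((hintΩN k i).const_mul _)).const_mul _).add
      ((integrable_finsetSum _ fun i _ => hintΩU k i).const_mul _)
  refine Finset.sum_congr rfl fun k _ => ?_
  rw [← integral_finsetSum_ofReal_smul_measure (fun j _ => hπ j) (fun j _ => hint' k j), ← hrel k]
  exact integral_partial_risk_estimator (hnN k) (hnU k)
    (fun i => .of_map_ne_zero (hlawN k i ▸ IsProbabilityMeasure.ne_zero _))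
    (fun i => .of_map_ne_zero (hlawU k i ▸ IsProbabilityMeasure.ne_zero _))
    (fun i => (hlawN k i).trans (hscar k)) (hlawU k) (hscar k ▸ hmix k) (hπ k) (hπ1 k)
    (hπbar k) (hπbar1 k) (hint k k) (hintN k (hint k)) (hintN k (hint' k))
    (hintΩN k) (hintΩN' k) (hintΩU k)

/-- under SCAR, the empirical risk estimator
R̂(f_1,...,f_q) = Σ_k R̂_k(f_k) is an unbiased estimator of the ordinary
one-versus-rest classification risk R(f_1,...,f_q) = E_{p(x,y)}[ℓ(f_y(x)) + Σ_{j≠y} ℓ(−f_j(x))]. -/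
theorem unbiased_risk_estimator
    {X Ω : Type*} [MeasurableSpace X] [MeasurableSpace Ω] {q : ℕ}
    (μΩ : Measure Ω) [IsProbabilityMeasure μΩ]
    (μP μN μbar1 μbar0 : Fin q → Measure X)
    [∀ k, IsProbabilityMeasure (μP k)] [∀ k, IsProbabilityMeasure (μN k)]
    [∀ k, IsProbabilityMeasure (μbar1 k)] [∀ k, IsProbabilityMeasure (μbar0 k)]
    (π πbar : Fin q → ℝ) (l : ℝ → ℝ) (f : Fin q → X → ℝ)
    (nN nU : Fin q → ℕ) (hnN : ∀ k, 0 < nN k) (hnU : ∀ k, 0 < nU k)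
    (XN : ∀ k, Fin (nN k) → Ω → X) (XU : ∀ k, Fin (nU k) → Ω → X)
    (hlawN : ∀ k i, Measure.map (XN k i) μΩ = μbar1 k)
    (hlawU : ∀ k i, Measure.map (XU k i) μΩ = μbar0 k)
    -- SCAR: p(x|ȳ_k=1) = p(x|y≠k)
    (hscar : ∀ k, μbar1 k = μN k)
    -- both mixtures equal the marginal p(x)
    (hmix : ∀ k, (ENNReal.ofReal (πbar k)) • μbar1 k + (ENNReal.ofReal (1 - πbar k)) • μbar0 k
      = (ENNReal.ofReal (π k)) • μP k + (ENNReal.ofReal (1 - π k)) • μN k)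
    -- (1−π_k) p(x|y≠k) = Σ_{j≠k} π_j p(x|y=j)
    (hrel : ∀ k, (ENNReal.ofReal (1 - π k)) • μN k
      = ∑ j ∈ Finset.univ.erase k, (ENNReal.ofReal (π j)) • μP j)
    (hl : ∀ z, 0 ≤ l z)
    (hπ : ∀ k, 0 ≤ π k) (hsum : ∑ k, π k = 1)
    (hπbar : ∀ k, 0 ≤ πbar k) (hπbar1 : ∀ k, πbar k ≤ 1)
    (hint : ∀ k j, Integrable (fun x => l (f k x)) (μP j))
    (hint' : ∀ k j, Integrable (fun x => l (-(f k x))) (μP j))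
    (hintΩN : ∀ k i, Integrable (fun ω => l (f k (XN k i ω))) μΩ)
    (hintΩN' : ∀ k i, Integrable (fun ω => l (-(f k (XN k i ω)))) μΩ)
    (hintΩU : ∀ k i, Integrable (fun ω => l (f k (XU k i ω))) μΩ) :
    ∫ ω, ∑ k, ((1 / (nN k : ℝ)) * ∑ i, ((1 - π k) * l (-(f k (XN k i ω)))
            + (πbar k + π k - 1) * l (f k (XN k i ω)))
          + ((1 - πbar k) / (nU k : ℝ)) * ∑ i, l (f k (XU k i ω))) ∂μΩ
      = ∑ k, (π k) * ∫ x, (l (f k x)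
          + ∑ j ∈ Finset.univ.erase k, l (-(f j x))) ∂(μP k) :=
  unbiased_risk_estimator_general μΩ μP μN μbar1 μbar0 π πbar l f nN nU hnN hnU XN XU hlawN hlawU
    hscar hmix hrel hπ hsum hπbar hπbar1 hint hint' hintΩN hintΩN' hintΩU
end

section
/- Let g : ℝ → ℝ be a nonnegative risk correction function with g(z) ≥ z for all z (e.g., g(z) = |z|), Lipschitz with constant L_g. Define the corrected estimator R̃_k(f_k) = g(R̂ᴾ_k(f_k)) + ((1−π_k)/n_k^N) Σ_i ℓ(−f_k(x_{k,i}^N)) and R̃ = Σ_k R̃_k. Then the bias satisfies 0 ≤ E[R̃(f_1,...,f_q)] − R(f_1,...,f_q) ≤ Σ_{k=1}^q (2−2π̄_k−π_k)(L_g+1) C_ℓ Δ_k, where Δ_k = exp( −2β² / ( (1−π_k−π̄_k)²C_ℓ²/n_k^N + (1−π̄_k)²C_ℓ²/n_k^U ) ). -/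
/-!
Since `z ≤ g z`, every term of the bias `E[g(R̂ᴾ_k)] - E[R̂ᴾ_k]` is nonnegative, and since `g` is
the identity on `[0, ∞)`, the integrand `g(R̂ᴾ_k) - R̂ᴾ_k` vanishes off the event `R̂ᴾ_k < 0`, where
the Lipschitz bound gives at most `(L_g + 1) |R̂ᴾ_k| ≤ (L_g + 1)(2 - 2π̄_k - π_k) C_ℓ`. The partial
risk `R̂ᴾ_k` is a weighted sum of independent bounded variables with mean at least `β ≥ 0`, so
Hoeffding's inequality bounds the probability of that event by `Δ_k`.
-/

open MeasureTheory ProbabilityTheory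
open scoped NNReal

/-- The partial empirical risk R̂ᴾ_k(f_k) built from the negative samples `xN` and
unlabeled samples `xU`. -/
noncomputable def partialRisk {X : Type*} (π πbar : ℝ) (l : ℝ → ℝ) (f : X → ℝ)
    {nN nU : ℕ} (xN : Fin nN → X) (xU : Fin nU → X) : ℝ :=
  (πbar + π - 1) / (nN : ℝ) * ∑ i, l (f (xN i))
    + (1 - πbar) / (nU : ℝ) * ∑ i, l (f (xU i))

/-- The remaining (nonnegative) part of the per-class empirical risk. -/
noncomputable def negPartRisk {X : Type*} (π : ℝ) (l : ℝ → ℝ) (f : X → ℝ)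
    {nN : ℕ} (xN : Fin nN → X) : ℝ :=
  (1 - π) / (nN : ℝ) * ∑ i, l (-(f (xN i)))

section Hoeffding

variable {Ω ι : Type*} [MeasurableSpace Ω] {μ : Measure Ω} [IsProbabilityMeasure μ] [Fintype ι]

theorem measureReal_sum_neg_le_of_iIndepFun {Y : ι → Ω → ℝ} (hY : ∀ i, AEMeasurable (Y i) μ)
    (hind : iIndepFun Y μ) {a b : ι → ℝ} (hab : ∀ i, ∀ᵐ ω ∂μ, Y i ω ∈ Set.Icc (a i) (b i))
    {β : ℝ} (hβ : 0 ≤ β) (hE : β ≤ ∑ i, μ[Y i]) :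
    μ.real {ω | ∑ i, Y i ω < 0} ≤ Real.exp (-2 * β ^ 2 / ∑ i, (b i - a i) ^ 2) := by
  have hsubG : ∀ i, HasSubgaussianMGF (fun ω ↦ μ[Y i] - Y i ω) ((‖b i - a i‖₊ / 2) ^ 2) μ :=
    fun i ↦ by
      convert (hasSubgaussianMGF_of_mem_Icc (hY i) (hab i)).neg using 1
      funext ω
      simp
  have hindc : iIndepFun (fun i ↦ (μ[Y i] - ·) ∘ Y i) μ :=
    hind.comp (fun i x ↦ μ[Y i] - x) fun _ ↦ measurable_const.sub measurable_id
  calc μ.real {ω | ∑ i, Y i ω < 0}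
      ≤ μ.real {ω | β ≤ ∑ i, (μ[Y i] - Y i ω)} := by
        refine measureReal_mono (fun ω hω ↦ ?_)
        simp only [Set.mem_ofPred_eq, Finset.sum_sub_distrib] at hω ⊢
        linarith
    _ ≤ Real.exp (-β ^ 2 / (2 * ∑ i, ((‖b i - a i‖₊ / 2) ^ 2 : ℝ≥0))) :=
        HasSubgaussianMGF.measure_sum_ge_le_of_iIndepFun hindc (fun i _ ↦ hsubG i) hβ
    _ = Real.exp (-2 * β ^ 2 / ∑ i, (b i - a i) ^ 2) := by
        push_cast
        simp only [Real.norm_eq_abs, div_pow, sq_abs, ← Finset.sum_div]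
        ring_nf

theorem measureReal_sum_mul_neg_le {X : Type*} [MeasurableSpace X] {Z : ι → Ω → X}
    (hZ : ∀ i, Measurable (Z i)) (hind : iIndepFun Z μ) {h : X → ℝ} (hh : Measurable h)
    {C : ℝ} (h0 : ∀ x, 0 ≤ h x) (hC : ∀ x, h x ≤ C) (w : ι → ℝ) {β : ℝ} (hβ : 0 ≤ β)
    (hE : β ≤ ∫ ω, ∑ i, w i * h (Z i ω) ∂μ) :
    μ.real {ω | ∑ i, w i * h (Z i ω) < 0} ≤ Real.exp (-2 * β ^ 2 / ∑ i, (w i * C) ^ 2) := by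
  have hY : ∀ i, AEMeasurable (fun ω ↦ w i * h (Z i ω)) μ :=
    fun i ↦ ((hh.comp (hZ i)).const_mul (w i)).aemeasurable
  -- `w i * h` ranges over an interval of width `|w i| C`, whence the denominator
  have hmem : ∀ i, ∀ᵐ ω ∂μ, w i * h (Z i ω) ∈ Set.Icc (min (w i * C) 0) (max (w i * C) 0) := by
    refine fun i ↦ ae_of_all _ fun ω ↦ ?_
    rcases le_total 0 (w i) with hw | hw
    · exact ⟨min_le_of_right_le (mul_nonneg hw (h0 _)),
        le_max_of_le_left (mul_le_mul_of_nonneg_left (hC _) hw)⟩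
    · exact ⟨min_le_of_left_le (mul_le_mul_of_nonpos_left (hC _) hw),
        le_max_of_le_right (mul_nonpos_of_nonpos_of_nonneg hw (h0 _))⟩
  have hindw : iIndepFun (fun i ↦ (fun x ↦ w i * h x) ∘ Z i) μ :=
    hind.comp _ fun i ↦ hh.const_mul (w i)
  convert measureReal_sum_neg_le_of_iIndepFun hY hindw hmem hβ ?_ using 4 with i
  · rw [max_sub_min_eq_abs, sq_abs, zero_sub, neg_sq]
  · rwa [← integral_finsetSum _ fun i _ ↦ Integrable.of_mem_Icc _ _ (hY i) (hmem i)]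

end Hoeffding

theorem sub_le_indicator_of_lipschitzWith {g : ℝ → ℝ} {L : ℝ≥0} (hg : LipschitzWith L g)
    (hgid : ∀ z, 0 ≤ z → g z = z) {z M : ℝ} (hzM : |z| ≤ M) :
    g z - z ≤ (Set.Iio 0).indicator (fun _ ↦ (L + 1) * M) z := by
  by_cases hz : z < 0
  · have hLip : |g z| ≤ L * |z| := by
      simpa [Real.dist_eq, hgid 0 le_rfl] using hg.dist_le_mul z 0
    rw [Set.indicator_of_mem (Set.mem_Iio.mpr hz)]
    calc g z - z ≤ L * |z| + |z| := by linarith [le_abs_self (g z), neg_abs_le z]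
      _ = (L + 1) * |z| := by ring
      _ ≤ (L + 1) * M := by gcongr
  · rw [Set.indicator_of_notMem (mt Set.mem_Iio.mp hz), hgid z (not_lt.mp hz), sub_self]

theorem integral_comp_sub_le_of_lipschitzWith {Ω : Type*} [MeasurableSpace Ω] {μ : Measure Ω}
    [IsFiniteMeasure μ] {g : ℝ → ℝ} {L : ℝ≥0} (hg : LipschitzWith L g)
    (hgid : ∀ z, 0 ≤ z → g z = z) {P : Ω → ℝ} (hP : Integrable P μ)
    (hgP : Integrable (fun ω ↦ g (P ω)) μ) {M : ℝ} (hPM : ∀ ω, |P ω| ≤ M) :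
    ∫ ω, (g (P ω) - P ω) ∂μ ≤ (L + 1) * M * μ.real {ω | P ω < 0} := by
  have hneg : NullMeasurableSet {ω | P ω < 0} μ :=
    hP.aemeasurable.nullMeasurableSet_preimage measurableSet_Iio
  calc ∫ ω, (g (P ω) - P ω) ∂μ
      ≤ ∫ ω, {ω | P ω < 0}.indicator (fun _ ↦ (L + 1) * M) ω ∂μ :=
        integral_mono (hgP.sub hP) ((integrable_const _).indicator₀ hneg) fun ω ↦
          (sub_le_indicator_of_lipschitzWith hg hgid (hPM ω)).trans_eq
            (Set.indicator_comp_right P).symm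
    _ = (L + 1) * M * μ.real {ω | P ω < 0} := by
        rw [integral_indicator₀ hneg, setIntegral_const, smul_eq_mul, mul_comm]

section PartialRisk

variable {X : Type*} {π πbar : ℝ} {l : ℝ → ℝ} {f : X → ℝ} {nN nU : ℕ}

noncomputable def partialRiskWeight (π πbar : ℝ) (nN nU : ℕ) : Fin nN ⊕ Fin nU → ℝ :=
  Sum.elim (fun _ ↦ (πbar + π - 1) / nN) (fun _ ↦ (1 - πbar) / nU)

theorem partialRisk_eq_sum (xN : Fin nN → X) (xU : Fin nU → X) :
    partialRisk π πbar l f xN xU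
      = ∑ j, partialRiskWeight π πbar nN nU j * l (f (Sum.elim xN xU j)) := by
  simp [partialRisk, partialRiskWeight, Fintype.sum_sum_type, Finset.mul_sum]

theorem sum_sq_partialRiskWeight_mul (hnN : 0 < nN) (hnU : 0 < nU) (C : ℝ) :
    ∑ j, (partialRiskWeight π πbar nN nU j * C) ^ 2
      = (1 - π - πbar) ^ 2 * C ^ 2 / nN + (1 - πbar) ^ 2 * C ^ 2 / nU := by
  simp only [partialRiskWeight, Fintype.sum_sum_type, Sum.elim_inl, Sum.elim_inr,
    Finset.sum_const, Finset.card_univ, Fintype.card_fin, nsmul_eq_mul]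
  field_simp
  ring

theorem abs_partialRisk_le (hnN : 0 < nN) (hnU : 0 < nU) (hπ : 0 ≤ π) (hππbar : π + πbar ≤ 1)
    {C : ℝ} (hl0 : ∀ z, 0 ≤ l z) (hlC : ∀ x, l (f x) ≤ C) (xN : Fin nN → X) (xU : Fin nU → X) :
    |partialRisk π πbar l f xN xU| ≤ (2 - 2 * πbar - π) * C := by
  have hsum_le : ∀ {n : ℕ} (x : Fin n → X), ∑ i, l (f (x i)) ≤ n * C := fun x ↦ by
    simpa using Finset.sum_le_card_nsmul Finset.univ _ C fun i _ ↦ hlC (x i)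
  have hsum_nonneg : ∀ {n : ℕ} (x : Fin n → X), 0 ≤ ∑ i, l (f (x i)) :=
    fun _ ↦ Finset.sum_nonneg fun _ _ ↦ hl0 _
  calc |partialRisk π πbar l f xN xU|
      ≤ |(πbar + π - 1) / nN| * ∑ i, l (f (xN i)) + |(1 - πbar) / nU| * ∑ i, l (f (xU i)) := by
        unfold partialRisk
        refine (abs_add_le _ _).trans_eq ?_
        rw [abs_mul, abs_mul, abs_of_nonneg (hsum_nonneg xN), abs_of_nonneg (hsum_nonneg xU)]
    _ ≤ |(πbar + π - 1) / nN| * (nN * C) + |(1 - πbar) / nU| * (nU * C) := by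
        gcongr
        exacts [hsum_le xN, hsum_le xU]
    _ = (2 - 2 * πbar - π) * C := by
        rw [abs_div, abs_div, Nat.abs_cast, Nat.abs_cast, abs_of_nonpos (by linarith),
          abs_of_nonneg (by linarith)]
        field_simp
        ring

theorem measureReal_partialRisk_neg_le {Ω : Type*} [MeasurableSpace Ω] [MeasurableSpace X]
    {μ : Measure Ω} [IsProbabilityMeasure μ] (hnN : 0 < nN) (hnU : 0 < nU)
    {XN : Fin nN → Ω → X} {XU : Fin nU → Ω → X} (hX : ∀ j, Measurable (Sum.elim XN XU j))
    (hind : iIndepFun (Sum.elim XN XU) μ) (hl : Measurable l) (hf : Measurable f) {C : ℝ}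
    (hl0 : ∀ z, 0 ≤ l z) (hlC : ∀ x, l (f x) ≤ C) {β : ℝ} (hβ : 0 ≤ β)
    (hE : β ≤ ∫ ω, partialRisk π πbar l f (fun i ↦ XN i ω) (fun i ↦ XU i ω) ∂μ) :
    μ.real {ω | partialRisk π πbar l f (fun i ↦ XN i ω) (fun i ↦ XU i ω) < 0}
      ≤ Real.exp (-2 * β ^ 2 / ((1 - π - πbar) ^ 2 * C ^ 2 / nN + (1 - πbar) ^ 2 * C ^ 2 / nU)) := by
  have hsum : ∀ ω, partialRisk π πbar l f (fun i ↦ XN i ω) (fun i ↦ XU i ω)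
      = ∑ j, partialRiskWeight π πbar nN nU j * l (f (Sum.elim XN XU j ω)) := fun ω ↦ by
    rw [partialRisk_eq_sum]
    rcongr (j | j)
  simp only [hsum] at hE ⊢
  rw [← sum_sq_partialRiskWeight_mul hnN hnU]
  exact measureReal_sum_mul_neg_le hX hind (hl.comp hf) (fun _ ↦ hl0 _) hlC _ hβ hE

end PartialRisk

theorem integral_sum_add_sub_integral_sum_add {Ω ι : Type*} [MeasurableSpace Ω] {μ : Measure Ω}
    {s : Finset ι} {A B N : ι → Ω → ℝ} (hA : ∀ k, Integrable (A k) μ)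
    (hB : ∀ k, Integrable (B k) μ) (hN : ∀ k, Integrable (N k) μ) :
    (∫ ω, ∑ k ∈ s, (A k ω + N k ω) ∂μ) - ∫ ω, ∑ k ∈ s, (B k ω + N k ω) ∂μ
      = ∑ k ∈ s, ∫ ω, (A k ω - B k ω) ∂μ := by
  rw [integral_finsetSum (f := fun k ω ↦ A k ω + N k ω) _ fun k _ ↦ (hA k).add (hN k),
    integral_finsetSum (f := fun k ω ↦ B k ω + N k ω) _ fun k _ ↦ (hB k).add (hN k),
    ← Finset.sum_sub_distrib]
  refine Finset.sum_congr rfl fun k _ ↦ ?_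
  rw [integral_add (hA k) (hN k), integral_add (hB k) (hN k), integral_sub (hA k) (hB k)]
  ring

theorem corrected_risk_bias_bound_general
    {X Ω : Type*} [MeasurableSpace X] [MeasurableSpace Ω] {q : ℕ}
    (μΩ : Measure Ω) [IsProbabilityMeasure μΩ]
    (π πbar : Fin q → ℝ) (l g : ℝ → ℝ) (f : Fin q → X → ℝ)
    (β Cl Lg : ℝ)
    (nN nU : Fin q → ℕ) (hnN : ∀ k, 0 < nN k) (hnU : ∀ k, 0 < nU k)
    (XN : ∀ k, Fin (nN k) → Ω → X) (XU : ∀ k, Fin (nU k) → Ω → X)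
    (hmN : ∀ k i, Measurable (XN k i)) (hmU : ∀ k i, Measurable (XU k i))
    (hml : Measurable l) (hmf : ∀ k, Measurable (f k))
    -- all samples are mutually independent
    (hindep : ProbabilityTheory.iIndepFun
      (fun (i : (k : Fin q) × (Fin (nN k) ⊕ Fin (nU k))) => Sum.elim (XN i.1) (XU i.1) i.2) μΩ)
    -- ℓ takes values in [0, C_ℓ] on the relevant range
    (hl0 : ∀ z, 0 ≤ l z) (hCl : 0 < Cl)
    (hlC : ∀ k x, l (f k x) ≤ Cl)
    -- the correction function g: nonnegative, upper bounds the identity,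
    -- equal to the identity on nonnegative reals, Lipschitz with constant L_g
    (hgz : ∀ z, z ≤ g z) (hgid : ∀ z, 0 ≤ z → g z = z)
    (hLg : LipschitzWith (Real.toNNReal Lg) g) (hLg0 : 0 ≤ Lg)
    (hβ : 0 ≤ β)
    (hπ : ∀ k, 0 ≤ π k) (hππbar : ∀ k, π k + πbar k ≤ 1)
    -- E[R̂ᴾ_k(f_k)] ≥ β for every k
    (hexp : ∀ k, β ≤ ∫ ω, partialRisk (π k) (πbar k) l (f k) (fun i => XN k i ω)
        (fun i => XU k i ω) ∂μΩ)
    (hintP : ∀ k, Integrable (fun ω => partialRisk (π k) (πbar k) l (f k)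
        (fun i => XN k i ω) (fun i => XU k i ω)) μΩ)
    (hintg : ∀ k, Integrable (fun ω => g (partialRisk (π k) (πbar k) l (f k)
        (fun i => XN k i ω) (fun i => XU k i ω))) μΩ)
    (hintN : ∀ k, Integrable (fun ω => negPartRisk (π k) l (f k) (fun i => XN k i ω)) μΩ) :
    0 ≤ (∫ ω, ∑ k, (g (partialRisk (π k) (πbar k) l (f k) (fun i => XN k i ω)
            (fun i => XU k i ω))
          + negPartRisk (π k) l (f k) (fun i => XN k i ω)) ∂μΩ)
        - (∫ ω, ∑ k, (partialRisk (π k) (πbar k) l (f k) (fun i => XN k i ω)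
            (fun i => XU k i ω)
          + negPartRisk (π k) l (f k) (fun i => XN k i ω)) ∂μΩ)
    ∧ (∫ ω, ∑ k, (g (partialRisk (π k) (πbar k) l (f k) (fun i => XN k i ω)
            (fun i => XU k i ω))
          + negPartRisk (π k) l (f k) (fun i => XN k i ω)) ∂μΩ)
        - (∫ ω, ∑ k, (partialRisk (π k) (πbar k) l (f k) (fun i => XN k i ω)
            (fun i => XU k i ω)
          + negPartRisk (π k) l (f k) (fun i => XN k i ω)) ∂μΩ)
      ≤ ∑ k, (2 - 2 * πbar k - π k) * (Lg + 1) * Cl *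
          Real.exp (-2 * β ^ 2 /
            ((1 - π k - πbar k) ^ 2 * Cl ^ 2 / (nN k : ℝ)
              + (1 - πbar k) ^ 2 * Cl ^ 2 / (nU k : ℝ))) := by
  rw [integral_sum_add_sub_integral_sum_add hintg hintP hintN]
  refine ⟨Finset.sum_nonneg fun k _ ↦ integral_nonneg fun ω ↦ sub_nonneg.2 (hgz _),
    Finset.sum_le_sum fun k _ ↦ ?_⟩
  have hP := abs_partialRisk_le (hnN k) (hnU k) (hπ k) (hππbar k) hl0 (hlC k)
  have htail := measureReal_partialRisk_neg_le (hnN k) (hnU k) (Sum.forall.2 ⟨hmN k, hmU k⟩)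
    (hindep.precomp (g := Sigma.mk k) sigma_mk_injective) hml (hmf k) hl0 (hlC k) hβ (hexp k)
  have hM : 0 ≤ (Lg + 1) * ((2 - 2 * πbar k - π k) * Cl) :=
    mul_nonneg (by linarith) (mul_nonneg (by linarith [hπ k, hππbar k]) hCl.le)
  calc _ ≤ (Lg + 1) * ((2 - 2 * πbar k - π k) * Cl) * μΩ.real {ω | partialRisk (π k) (πbar k)
          l (f k) (fun i ↦ XN k i ω) (fun i ↦ XU k i ω) < 0} := by
        simpa only [Real.coe_toNNReal _ hLg0] using integral_comp_sub_le_of_lipschitzWith hLg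
          hgid (hintP k) (hintg k) fun ω ↦ hP _ _
    _ ≤ (Lg + 1) * ((2 - 2 * πbar k - π k) * Cl) * _ := mul_le_mul_of_nonneg_left htail hM
    _ = _ := by ring

/-- the bias of the corrected risk estimator
R̃ = Σ_k [g(R̂ᴾ_k(f_k)) + ((1−π_k)/n_k^N) Σ_i ℓ(−f_k(x_{k,i}^N))] satisfies
0 ≤ E[R̃] − R ≤ Σ_k (2−2π̄_k−π_k)(L_g+1) C_ℓ Δ_k, where R = E[R̂]. -/
theorem corrected_risk_bias_bound
    {X Ω : Type*} [MeasurableSpace X] [MeasurableSpace Ω] {q : ℕ}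
    (μΩ : Measure Ω) [IsProbabilityMeasure μΩ]
    (π πbar : Fin q → ℝ) (l g : ℝ → ℝ) (f : Fin q → X → ℝ)
    (β Cl Lg : ℝ)
    (nN nU : Fin q → ℕ) (hnN : ∀ k, 0 < nN k) (hnU : ∀ k, 0 < nU k)
    (XN : ∀ k, Fin (nN k) → Ω → X) (XU : ∀ k, Fin (nU k) → Ω → X)
    (hmN : ∀ k i, Measurable (XN k i)) (hmU : ∀ k i, Measurable (XU k i))
    (hml : Measurable l) (hmf : ∀ k, Measurable (f k))
    -- all samples are mutually independent
    (hindep : ProbabilityTheory.iIndepFun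
      (fun (i : (k : Fin q) × (Fin (nN k) ⊕ Fin (nU k))) => Sum.elim (XN i.1) (XU i.1) i.2) μΩ)
    -- ℓ takes values in [0, C_ℓ] on the relevant range
    (hl0 : ∀ z, 0 ≤ l z) (hCl : 0 < Cl)
    (hlC : ∀ k x, l (f k x) ≤ Cl) (hlC' : ∀ k x, l (-(f k x)) ≤ Cl)
    -- the correction function g: nonnegative, upper bounds the identity,
    -- equal to the identity on nonnegative reals, Lipschitz with constant L_g
    (hg0 : ∀ z, 0 ≤ g z) (hgz : ∀ z, z ≤ g z) (hgid : ∀ z, 0 ≤ z → g z = z)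
    (hLg : LipschitzWith (Real.toNNReal Lg) g) (hLg0 : 0 ≤ Lg)
    (hβ : 0 ≤ β)
    (hπ : ∀ k, 0 ≤ π k) (hπbar : ∀ k, 0 ≤ πbar k) (hππbar : ∀ k, π k + πbar k ≤ 1)
    -- E[R̂ᴾ_k(f_k)] ≥ β for every k
    (hexp : ∀ k, β ≤ ∫ ω, partialRisk (π k) (πbar k) l (f k) (fun i => XN k i ω)
        (fun i => XU k i ω) ∂μΩ)
    (hintP : ∀ k, Integrable (fun ω => partialRisk (π k) (πbar k) l (f k)
        (fun i => XN k i ω) (fun i => XU k i ω)) μΩ)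
    (hintg : ∀ k, Integrable (fun ω => g (partialRisk (π k) (πbar k) l (f k)
        (fun i => XN k i ω) (fun i => XU k i ω))) μΩ)
    (hintN : ∀ k, Integrable (fun ω => negPartRisk (π k) l (f k) (fun i => XN k i ω)) μΩ) :
    0 ≤ (∫ ω, ∑ k, (g (partialRisk (π k) (πbar k) l (f k) (fun i => XN k i ω)
            (fun i => XU k i ω))
          + negPartRisk (π k) l (f k) (fun i => XN k i ω)) ∂μΩ)
        - (∫ ω, ∑ k, (partialRisk (π k) (πbar k) l (f k) (fun i => XN k i ω)
            (fun i => XU k i ω)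
          + negPartRisk (π k) l (f k) (fun i => XN k i ω)) ∂μΩ)
    ∧ (∫ ω, ∑ k, (g (partialRisk (π k) (πbar k) l (f k) (fun i => XN k i ω)
            (fun i => XU k i ω))
          + negPartRisk (π k) l (f k) (fun i => XN k i ω)) ∂μΩ)
        - (∫ ω, ∑ k, (partialRisk (π k) (πbar k) l (f k) (fun i => XN k i ω)
            (fun i => XU k i ω)
          + negPartRisk (π k) l (f k) (fun i => XN k i ω)) ∂μΩ)
      ≤ ∑ k, (2 - 2 * πbar k - π k) * (Lg + 1) * Cl *
          Real.exp (-2 * β ^ 2 /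
            ((1 - π k - πbar k) ^ 2 * Cl ^ 2 / (nN k : ℝ)
              + (1 - πbar k) ^ 2 * Cl ^ 2 / (nU k : ℝ))) :=
  corrected_risk_bias_bound_general μΩ π πbar l g f β Cl Lg nN nU hnN hnU XN XU hmN hmU hml hmf
    hindep hl0 hCl hlC hgz hgid hLg hLg0 hβ hπ hππbar hexp hintP hintg hintN
end
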